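/- Let G be a finitely generated group. Then the following are equivalent: (1) G is free abelian; (2) there is a finite symmetric generating set X of G such that Geo(G,X) is 1-locally testable; (3) there is a finite symmetric generating set X of G such that, with L = Geo(G,X), every nonempty word w over X satisfies w ∼_L w² (the syntactic semigroup of Geo(G,X) is idempotent). -/

import Mathlib

/-- `pre_{k-1}`, `suf_{k-1}` and `sub_k` agree: the equivalence `∼_k` on words. -/
def SimK {A : Type*} (k : ℕ) (u v : List A) : Prop :=
  u.take (k - 1) = v.take (k - 1) ∧
  u.drop (u.length - (k - 1)) = v.drop (v.length - (k - 1)) ∧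
  ∀ s : List A, s.length = k → (s <:+: u ↔ s <:+: v)

/-- A language `L` is `k`-locally testable if membership is invariant under `∼_k`. -/
def LocallyTestable {A : Type*} (k : ℕ) (L : Set (List A)) : Prop :=
  ∀ u v : List A, SimK k u v → (u ∈ L ↔ v ∈ L)

/-- The syntactic congruence of a language: `u ∼_L v` iff `sut ∈ L ↔ svt ∈ L` for all `s, t`. -/
def SynCong {A : Type*} (L : Set (List A)) (u v : List A) : Prop :=
  ∀ s t : List A, s ++ u ++ t ∈ L ↔ s ++ v ++ t ∈ L

/-- The element of `G` represented by a word over the generating set `X`. -/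
def wordProd {G : Type*} [Group G] {X : Set G} (w : List X) : G :=
  (w.map Subtype.val).prod

/-- A word over `X` is geodesic if no word representing the same element is shorter. -/
def IsGeodesic {G : Type*} [Group G] (X : Set G) (w : List X) : Prop :=
  ∀ v : List X, wordProd v = wordProd w → w.length ≤ v.length

/-- The language of all geodesic words over `X`. -/
def Geo {G : Type*} [Group G] (X : Set G) : Set (List X) :=
  {w | IsGeodesic X w}

/-- The `j`-th power of a word in the free monoid (concatenation of `j` copies). -/
def listPow {A : Type*} (w : List A) : ℕ → List A
  | 0 => []
  | n + 1 => w ++ listPow w n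

/-
For (1) ⇒ (2) take the generators `±eᵢ` of `ℤⁿ`. A word is geodesic iff it contains no letter
together with its inverse: such a pair cancels by commutativity, and otherwise, with `sᵢ` the
sign with which `eᵢ` occurs, the functional `v ↦ Σ sᵢ vᵢ` is `1` on every letter of the word and
at most `1` on every generator. This only depends on the set of letters. (2) ⇒ (3) holds because
`w` and `ww` contain the same letters.

For (3) ⇒ (1), idempotency makes every power of a geodesic geodesic, so the word norm satisfies
`|gⁿ| = n|g|`. Hence `G` is torsion-free, and `n|chc⁻¹| = |chⁿc⁻¹| ≤ n|h| + |c| + |c⁻¹|` makes the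
norm conjugation invariant. So each generator has finitely many conjugates, the center has finite
index, and by Schur's theorem the commutator subgroup is finite, hence trivial. Finally, a finitely
generated torsion-free abelian group is free abelian.
-/

open Subgroup

section Languages

variable {A : Type*}

theorem simK_one_iff {u v : List A} : SimK 1 u v ↔ ∀ a, a ∈ u ↔ a ∈ v := by
  refine ⟨fun ⟨_, _, h⟩ a => by simpa only [List.singleton_infix_iff] using h [a] rfl,
    fun h => ⟨by simp, by simp, fun s hs => ?_⟩⟩
  obtain ⟨a, rfl⟩ := List.length_eq_one_iff.mp hs
  simpa only [List.singleton_infix_iff] using h a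

theorem LocallyTestable.synCong_self_append_self {L : Set (List A)} (hL : LocallyTestable 1 L)
    (w : List A) : SynCong L w (w ++ w) :=
  fun s t => hL _ _ (simK_one_iff.mpr fun a => by simp only [List.mem_append]; tauto)

end Languages

section Words

variable {G : Type*} [Group G] {X : Set G}

@[simp]
theorem wordProd_nil : wordProd ([] : List X) = 1 := rfl

@[simp]
theorem wordProd_cons (x : X) (w : List X) : wordProd (x :: w) = x * wordProd w :=
  List.prod_cons

@[simp]
theorem wordProd_append (u v : List X) : wordProd (u ++ v) = wordProd u * wordProd v := by
  simp [wordProd]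

theorem wordProd_listPow (w : List X) (n : ℕ) : wordProd (listPow w n) = wordProd w ^ n := by
  induction n with
  | zero => rw [listPow, pow_zero]; rfl
  | succ n ih => rw [listPow, wordProd_append, ih, pow_succ']

theorem length_listPow {A : Type*} (w : List A) (n : ℕ) :
    (listPow w n).length = n * w.length := by
  induction n with
  | zero => simp [listPow]
  | succ n ih => rw [listPow, List.length_append, ih, Nat.succ_mul, add_comm]

theorem wordProd_surjective (hsym : ∀ x ∈ X, x⁻¹ ∈ X) (hgen : closure X = ⊤) :
    Function.Surjective (wordProd : List X → G) := by
  intro g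
  have hX : X ∪ X⁻¹ = X := Set.union_eq_left.mpr fun x hx => by simpa using hsym _ hx
  have hg : g ∈ Submonoid.closure X := by
    rw [← hX, ← closure_toSubmonoid, hgen]
    trivial
  obtain ⟨l, hl, rfl⟩ := Submonoid.exists_list_of_mem_closure hg
  lift l to List X using hl
  exact ⟨l, rfl⟩

theorem nil_mem_geo : ([] : List X) ∈ Geo X := fun _ _ => Nat.zero_le _

theorem notMem_geo_of_mul_eq_one (hG : ∀ a b : G, Commute a b) {w : List X} {x y : X}
    (hx : x ∈ w) (hy : y ∈ w) (hxy : x ≠ y) (h : (x : G) * y = 1) : w ∉ Geo X := by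
  classical
  intro hw
  have hy' : y ∈ w.erase x := (List.mem_erase_of_ne hxy.symm).mpr hy
  have hperm : (w.map Subtype.val).Perm
      ((x : G) :: y :: ((w.erase x).erase y).map Subtype.val) := by
    simpa using ((List.perm_cons_erase hx).trans ((List.perm_cons_erase hy').cons x)).map
      Subtype.val
  have hprod : wordProd ((w.erase x).erase y) = wordProd w := by
    rw [wordProd, wordProd, hperm.prod_eq' (List.pairwise_of_forall hG), List.prod_cons,
      List.prod_cons, ← mul_assoc, h, one_mul]
  have := hw _ hprod
  have := List.length_erase_of_mem hx
  have := List.length_erase_of_mem hy'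
  have := List.length_pos_of_mem hy'
  omega

theorem mem_geo_of_monoidHom (φ : G →* Multiplicative ℤ) {w : List X}
    (hX : ∀ x ∈ X, (φ x).toAdd ≤ 1) (hw : ∀ x ∈ w, (φ x).toAdd = 1) : w ∈ Geo X := by
  have hsum : ∀ u : List X, (φ (wordProd u)).toAdd = (u.map fun x : X => (φ x).toAdd).sum := by
    intro u
    induction u with
    | nil => simp
    | cons x u ih => simp [ih]
  intro v hv
  have hw' : (φ (wordProd w)).toAdd = w.length := by
    rw [hsum, List.sum_eq_card_nsmul _ 1 ?_]
    · simp
    intro a ha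
    obtain ⟨x, hx, rfl⟩ := List.mem_map.mp ha
    exact hw x hx
  have hv' : (φ (wordProd v)).toAdd ≤ v.length := by
    rw [hsum]
    refine (List.sum_le_card_nsmul _ 1 ?_).trans (by simp)
    intro a ha
    obtain ⟨x, -, rfl⟩ := List.mem_map.mp ha
    exact hX x x.2
  rw [hv, hw'] at hv'
  exact_mod_cast hv'

end Words

section WordNorm

variable {G : Type*} [Group G] {X : Set G}

noncomputable def wordNorm (X : Set G) (g : G) : ℕ :=
  sInf (List.length '' {w : List X | wordProd w = g})

theorem wordNorm_le_length (w : List X) : wordNorm X (wordProd w) ≤ w.length :=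
  Nat.sInf_le (Set.mem_image_of_mem _ rfl)

theorem wordNorm_le_one {x : G} (hx : x ∈ X) : wordNorm X x ≤ 1 := by
  simpa using wordNorm_le_length [⟨x, hx⟩]

theorem exists_wordProd_eq_wordNorm (hX : Function.Surjective (wordProd : List X → G)) (g : G) :
    ∃ w : List X, wordProd w = g ∧ w.length = wordNorm X g := by
  obtain ⟨w, hw⟩ := hX g
  exact Nat.sInf_mem (s := List.length '' {w : List X | wordProd w = g}) ⟨_, w, hw, rfl⟩

theorem mem_geo_iff_length_eq_wordNorm (hX : Function.Surjective (wordProd : List X → G))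
    {w : List X} : w ∈ Geo X ↔ w.length = wordNorm X (wordProd w) := by
  constructor
  · intro hw
    obtain ⟨v, hv, hlen⟩ := exists_wordProd_eq_wordNorm hX (wordProd w)
    exact le_antisymm (hlen ▸ hw v hv) (wordNorm_le_length w)
  · intro h v hv
    rw [h, ← hv]
    exact wordNorm_le_length v

theorem wordNorm_eq_zero (hX : Function.Surjective (wordProd : List X → G)) {g : G} :
    wordNorm X g = 0 ↔ g = 1 := by
  constructor
  · intro h
    obtain ⟨w, rfl, hlen⟩ := exists_wordProd_eq_wordNorm hX g
    rw [h, List.length_eq_zero_iff] at hlen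
    rw [hlen, wordProd_nil]
  · rintro rfl
    exact Nat.le_zero.mp (wordNorm_le_length ([] : List X))

theorem wordNorm_mul_le (hX : Function.Surjective (wordProd : List X → G)) (g h : G) :
    wordNorm X (g * h) ≤ wordNorm X g + wordNorm X h := by
  obtain ⟨u, rfl, hu⟩ := exists_wordProd_eq_wordNorm hX g
  obtain ⟨v, rfl, hv⟩ := exists_wordProd_eq_wordNorm hX h
  rw [← hu, ← hv, ← List.length_append, ← wordProd_append]
  exact wordNorm_le_length _

theorem finite_setOf_wordNorm_le (hXfin : X.Finite)
    (hX : Function.Surjective (wordProd : List X → G)) (r : ℕ) :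
    {g | wordNorm X g ≤ r}.Finite := by
  have := hXfin.to_subtype
  refine ((List.finite_length_le X r).image wordProd).subset fun g hg => ?_
  obtain ⟨w, rfl, hw⟩ := exists_wordProd_eq_wordNorm hX g
  exact ⟨w, hw.trans_le hg, rfl⟩

end WordNorm

section Idempotent

variable {G : Type*} [Group G] {X : Set G}

theorem listPow_mem_geo (hid : ∀ w : List X, w ≠ [] → SynCong (Geo X) w (w ++ w))
    {w : List X} (hw : w ∈ Geo X) (n : ℕ) : listPow w n ∈ Geo X := by
  rcases eq_or_ne w [] with rfl | hne
  · have : listPow ([] : List X) n = [] :=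
      List.eq_nil_of_length_eq_zero (by rw [length_listPow, List.length_nil, mul_zero])
    rw [this]
    exact nil_mem_geo
  have hsucc : ∀ n, listPow w (n + 1) ∈ Geo X := by
    intro n
    induction n with
    | zero => simpa [listPow] using hw
    | succ n ih =>
      have := (hid w hne [] (listPow w n)).mp (by simpa [listPow] using ih)
      simpa [listPow] using this
  cases n
  exacts [nil_mem_geo, hsucc _]

theorem wordNorm_pow (hid : ∀ w : List X, w ≠ [] → SynCong (Geo X) w (w ++ w))
    (hX : Function.Surjective (wordProd : List X → G)) (g : G) (n : ℕ) :
    wordNorm X (g ^ n) = n * wordNorm X g := by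
  obtain ⟨w, rfl, hw⟩ := exists_wordProd_eq_wordNorm hX g
  have hgeo : w ∈ Geo X := (mem_geo_iff_length_eq_wordNorm hX).mpr hw
  have := (mem_geo_iff_length_eq_wordNorm hX).mp (listPow_mem_geo hid hgeo n)
  rw [length_listPow, wordProd_listPow, hw] at this
  exact this.symm

theorem eq_one_of_isOfFinOrder (hid : ∀ w : List X, w ≠ [] → SynCong (Geo X) w (w ++ w))
    (hX : Function.Surjective (wordProd : List X → G)) {g : G} (hg : IsOfFinOrder g) : g = 1 := by
  obtain ⟨n, hn, hgn⟩ := isOfFinOrder_iff_pow_eq_one.mp hg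
  have := wordNorm_pow hid hX g n
  rw [hgn, (wordNorm_eq_zero hX).mpr rfl] at this
  exact (wordNorm_eq_zero hX).mp ((Nat.mul_eq_zero.mp this.symm).resolve_left hn.ne')

theorem wordNorm_conj_le (hid : ∀ w : List X, w ≠ [] → SynCong (Geo X) w (w ++ w))
    (hX : Function.Surjective (wordProd : List X → G)) (c h : G) :
    wordNorm X (c * h * c⁻¹) ≤ wordNorm X h := by
  set k := wordNorm X c + wordNorm X c⁻¹
  have key : ∀ n, n * wordNorm X (c * h * c⁻¹) ≤ n * wordNorm X h + k := by
    intro n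
    calc n * wordNorm X (c * h * c⁻¹) = wordNorm X (c * h ^ n * c⁻¹) := by
          rw [← wordNorm_pow hid hX, conj_pow]
      _ ≤ wordNorm X (c * h ^ n) + wordNorm X c⁻¹ := wordNorm_mul_le hX _ _
      _ ≤ wordNorm X c + wordNorm X (h ^ n) + wordNorm X c⁻¹ := by
          gcongr
          exact wordNorm_mul_le hX _ _
      _ = n * wordNorm X h + k := by
          rw [wordNorm_pow hid hX]
          ring
  by_contra! hlt
  nlinarith [key (k + 1)]

theorem finite_setOf_isConj (hid : ∀ w : List X, w ≠ [] → SynCong (Geo X) w (w ++ w))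
    (hX : Function.Surjective (wordProd : List X → G)) (hXfin : X.Finite) {x : G} (hx : x ∈ X) :
    {y | IsConj y x}.Finite := by
  refine (finite_setOf_wordNorm_le hXfin hX 1).subset fun y hy => ?_
  obtain ⟨c, rfl⟩ := isConj_iff.mp (IsConj.symm hy)
  exact (wordNorm_conj_le hid hX c x).trans (wordNorm_le_one hx)

end Idempotent

section GroupTheory

open scoped commutatorElement

variable {G : Type*} [Group G]

theorem Subgroup.finiteIndex_centralizer_singleton {g : G} (h : {y | IsConj y g}.Finite) :
    (centralizer {g}).FiniteIndex := by
  have horbit : MulAction.orbit (ConjAct G) g = {y | IsConj y g} := by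
    ext
    exact ConjAct.mem_orbit_conjAct
  have hindex : (MulAction.stabilizer (ConjAct G) g).index ≠ 0 := by
    rw [MulAction.index_stabilizer, horbit]
    exact ((Set.ncard_pos h).mpr ⟨g, IsConj.refl g⟩).ne'
  rw [centralizer_eq_comap_stabilizer]
  exact ⟨(index_comap_of_surjective _ ConjAct.toConjAct.surjective).trans_ne hindex⟩

theorem Subgroup.finiteIndex_center_of_finite_isConj {X : Set G} (hXfin : X.Finite)
    (hgen : closure X = ⊤) (hconj : ∀ x ∈ X, {y | IsConj y x}.Finite) :
    (center G).FiniteIndex := by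
  have := hXfin.to_subtype
  rw [center_eq_infi' hgen]
  exact finiteIndex_iInf fun x => finiteIndex_centralizer_singleton (hconj x x.2)

theorem commutatorElement_mul_mul_of_mem_center {a b z z' : G} (hz : z ∈ center G)
    (hz' : z' ∈ center G) : ⁅a * z, b * z'⁆ = ⁅a, b⁆ := by
  rw [mem_center_iff] at hz hz'
  have hz₁ : ⁅z, b * z'⁆ = 1 := commutatorElement_eq_one_iff_mul_comm.mpr (hz _).symm
  have hz₂ : ⁅a, z'⁆ = 1 := commutatorElement_eq_one_iff_mul_comm.mpr (hz' a)
  rw [commutatorElement_mul_left_eq_conj_mul, hz₁, commutatorElement_mul_right_eq_mul_conj, hz₂]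
  group

theorem finite_commutatorSet_of_finiteIndex_center [(center G).FiniteIndex] :
    Finite (commutatorSet G) := by
  refine Set.Finite.to_subtype ((Set.finite_range
    fun p : (G ⧸ center G) × (G ⧸ center G) => ⁅p.1.out, p.2.out⁆).subset ?_)
  rintro _ ⟨a, b, rfl⟩
  obtain ⟨z, hz⟩ := QuotientGroup.mk_out_eq_mul (center G) a
  obtain ⟨z', hz'⟩ := QuotientGroup.mk_out_eq_mul (center G) b
  exact ⟨(a, b), by simp only [hz, hz']; exact commutatorElement_mul_mul_of_mem_center z.2 z'.2⟩

theorem commute_of_finiteIndex_center [(center G).FiniteIndex]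
    (htf : ∀ g : G, IsOfFinOrder g → g = 1) (a b : G) : Commute a b := by
  have := finite_commutatorSet_of_finiteIndex_center (G := G)
  have hc : IsOfFinOrder (⟨⁅a, b⁆, commutator_mem_commutator (mem_top a) (mem_top b)⟩ :
    _root_.commutator G) := isOfFinOrder_of_finite _
  exact commutatorElement_eq_one_iff_commute.mp (htf _ (Submonoid.isOfFinOrder_coe.mpr hc))

theorem CommGroup.exists_mulEquiv_fin_int (A : Type*) [CommGroup A] [Group.FG A]
    [IsMulTorsionFree A] : ∃ n : ℕ, Nonempty (A ≃* Multiplicative (Fin n → ℤ)) := by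
  have : Module.Finite ℤ (Additive A) := Module.Finite.iff_addGroup_fg.mpr inferInstance
  obtain ⟨n, b⟩ := Module.basisOfFiniteTypeTorsionFree' (R := ℤ) (M := Additive A)
  exact ⟨n, ⟨AddEquiv.toMultiplicative b.equivFun.toAddEquiv⟩⟩

end GroupTheory

theorem exists_mulEquiv_of_idempotent_geo {G : Type*} [Group G] {X : Set G} (hXfin : X.Finite)
    (hsym : ∀ x ∈ X, x⁻¹ ∈ X) (hgen : closure X = ⊤)
    (hid : ∀ w : List X, w ≠ [] → SynCong (Geo X) w (w ++ w)) :
    ∃ n : ℕ, Nonempty (G ≃* Multiplicative (Fin n → ℤ)) := by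
  have hX := wordProd_surjective hsym hgen
  have htf : ∀ g : G, IsOfFinOrder g → g = 1 := fun _ => eq_one_of_isOfFinOrder hid hX
  have : (center G).FiniteIndex :=
    finiteIndex_center_of_finite_isConj hXfin hgen fun _ => finite_setOf_isConj hid hX hXfin
  let _ : CommGroup G := { mul_comm := commute_of_finiteIndex_center htf }
  have : Group.FG G := Group.fg_iff.mpr ⟨X, hgen, hXfin⟩
  have : IsMulTorsionFree G := .of_not_isOfFinOrder fun g hg hfin => hg (htf g hfin)
  exact CommGroup.exists_mulEquiv_fin_int G

section StandardGenerators

variable {G : Type*} [Group G] {n : ℕ} (e : G ≃* Multiplicative (Fin n → ℤ))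

def stdGen (i : Fin n) (ε : ℤˣ) : G :=
  e.symm (.ofAdd (Pi.single i (ε : ℤ)))

def stdGenerators : Set G :=
  Set.range fun p : Fin n × ℤˣ => stdGen e p.1 p.2

theorem stdGen_neg (i : Fin n) (ε : ℤˣ) : stdGen e i (-ε) = (stdGen e i ε)⁻¹ := by
  simp [stdGen, ← map_inv, Pi.single_neg]

theorem stdGen_mul_self_ne_one (i : Fin n) (ε : ℤˣ) : stdGen e i ε * stdGen e i ε ≠ 1 := by
  intro h
  have := congrArg (fun g => (e g).toAdd i) h
  rcases Int.units_eq_one_or ε with rfl | rfl <;> simp [stdGen] at this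

theorem finite_stdGenerators : (stdGenerators e).Finite :=
  Set.finite_range _

theorem inv_mem_stdGenerators : ∀ x ∈ stdGenerators e, x⁻¹ ∈ stdGenerators e := by
  rintro _ ⟨⟨i, ε⟩, rfl⟩
  exact ⟨⟨i, -ε⟩, stdGen_neg e i ε⟩

theorem closure_stdGenerators : closure (stdGenerators e) = ⊤ := by
  have hK : ∀ v, Multiplicative.ofAdd v ∈
      (closure (stdGenerators e)).comap e.symm.toMonoidHom := by
    intro v
    rw [← Finset.univ_sum_single v, ofAdd_sum]
    refine prod_mem fun i _ => ?_
    rw [← mul_one (v i), ← smul_eq_mul, Pi.single_smul', ofAdd_zsmul]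
    have hgen : stdGen e i 1 ∈ stdGenerators e := ⟨⟨i, 1⟩, rfl⟩
    exact zpow_mem (mem_comap.mpr (subset_closure hgen)) _
  refine eq_top_iff.mpr fun g _ => ?_
  simpa using hK (e g).toAdd

theorem mem_geo_stdGenerators_of_forall_mul_ne_one {w : List (stdGenerators e)}
    (hw : ∀ x ∈ w, ∀ y ∈ w, (x : G) * y ≠ 1) : w ∈ Geo (stdGenerators e) := by
  classical
  let s : Fin n → ℤ := fun i => if ∃ y ∈ w, (y : G) = stdGen e i (-1) then -1 else 1
  let φ : G →* Multiplicative ℤ := (AddMonoidHom.toMultiplicative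
    (AddMonoidHom.mk' (s ⬝ᵥ ·) (dotProduct_add s))).comp e.toMonoidHom
  have hφ : ∀ i ε, (φ (stdGen e i ε)).toAdd = s i * ε := by
    intro i ε
    simp [φ, stdGen, dotProduct_single, mul_comm]
  refine mem_geo_of_monoidHom φ ?_ ?_
  · rintro _ ⟨⟨i, ε⟩, rfl⟩
    rw [hφ]
    rcases Int.units_eq_one_or ε with rfl | rfl <;> dsimp only [s] <;> split_ifs <;> simp
  · rintro ⟨_, ⟨i, ε⟩, rfl⟩ hx
    dsimp only at hx ⊢
    rw [hφ]
    dsimp only [s]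
    rcases Int.units_eq_one_or ε with rfl | rfl
    · rw [if_neg]
      · simp
      rintro ⟨y, hy, hyi⟩
      exact hw _ hx y hy (by rw [hyi, stdGen_neg, mul_inv_cancel])
    · rw [if_pos ⟨_, hx, rfl⟩]
      simp

theorem mem_geo_stdGenerators_iff (w : List (stdGenerators e)) :
    w ∈ Geo (stdGenerators e) ↔ ∀ x ∈ w, ∀ y ∈ w, (x : G) * y ≠ 1 := by
  refine ⟨fun hw x hx y hy hxy => ?_, mem_geo_stdGenerators_of_forall_mul_ne_one e⟩
  by_cases hxy' : x = y
  · subst hxy'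
    obtain ⟨⟨i, ε⟩, hi⟩ := x.2
    rw [← hi] at hxy
    exact stdGen_mul_self_ne_one e i ε hxy
  · have hG : ∀ a b : G, Commute a b := fun a b =>
      e.injective (by simp only [map_mul]; exact mul_comm _ _)
    exact notMem_geo_of_mul_eq_one hG hx hy hxy' hxy hw

theorem locallyTestable_geo_stdGenerators : LocallyTestable 1 (Geo (stdGenerators e)) := by
  intro u v huv
  simp only [mem_geo_stdGenerators_iff, simK_one_iff.mp huv]

end StandardGenerators

theorem stmt17_general {G : Type*} [Group G] :
    List.TFAE
      [∃ n : ℕ, Nonempty (G ≃* Multiplicative (Fin n → ℤ)),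
       ∃ X : Set G, X.Finite ∧ (∀ x ∈ X, x⁻¹ ∈ X) ∧ Subgroup.closure X = ⊤ ∧
         LocallyTestable 1 (Geo X),
       ∃ X : Set G, X.Finite ∧ (∀ x ∈ X, x⁻¹ ∈ X) ∧ Subgroup.closure X = ⊤ ∧
         ∀ w : List X, w ≠ [] → SynCong (Geo X) w (w ++ w)] := by
  tfae_have 1 → 2
  | ⟨n, ⟨e⟩⟩ => ⟨stdGenerators e, finite_stdGenerators e, inv_mem_stdGenerators e,
      closure_stdGenerators e, locallyTestable_geo_stdGenerators e⟩
  tfae_have 2 → 3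
  | ⟨X, hXfin, hsym, hgen, hL⟩ => ⟨X, hXfin, hsym, hgen, fun w _ => hL.synCong_self_append_self w⟩
  tfae_have 3 → 1
  | ⟨_, hXfin, hsym, hgen, hid⟩ => exists_mulEquiv_of_idempotent_geo hXfin hsym hgen hid
  tfae_finish

/-- For a finitely generated group `G`, the following are equivalent:
(1) `G` is free abelian; (2) some finite symmetric generating set `X` has `Geo(G,X)`
1-locally testable; (3) some finite symmetric generating set `X` has the syntactic
semigroup of `Geo(G,X)` idempotent. -/
theorem stmt17 {G : Type*} [Group G]
    (hfg : ∃ S : Set G, S.Finite ∧ Subgroup.closure S = ⊤) :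
    List.TFAE
      [∃ n : ℕ, Nonempty (G ≃* Multiplicative (Fin n → ℤ)),
       ∃ X : Set G, X.Finite ∧ (∀ x ∈ X, x⁻¹ ∈ X) ∧ Subgroup.closure X = ⊤ ∧
         LocallyTestable 1 (Geo X),
       ∃ X : Set G, X.Finite ∧ (∀ x ∈ X, x⁻¹ ∈ X) ∧ Subgroup.closure X = ⊤ ∧
         ∀ w : List X, w ≠ [] → SynCong (Geo X) w (w ++ w)] :=
  stmt17_general
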